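/- There is a bijection between the set of signed skew derangements on [n] whose representation π = π_1 ⋯ π_n satisfies π_n ≠ 0 (last entry is not unbarred zero) and the set of derangements of type B on [n]; hence the number of such signed skew derangements equals D_n^B. -/

import Mathlib

/-!
A signed skew derangement is determined by its signs `ε` and the underlying values `σ i` of the
images. Rotating the values back by one, `τ i = σ i - 1 (mod n)`, turns the condition
`f(x) ≠ x` at position `i` into: `τ i = i` only if the signs at `i` and `i + 1` differ. The one
exception is the wrap-around position `n - 1`, where `τ (n - 1) = n - 1` means `π_n = 0`; this is
excluded exactly when `0` carries the unbarred sign. Recording at each position whether the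
relevant signs agree gives a sign vector `c` such that `i ↦ (τ i, c i)` is a derangement of type B,
and `ε ↦ c` is invertible: `c (n - 1)` is the sign of `0`, and then `c i` determines the sign of
`i + 1` from that of `i`.
-/

open Function

variable {n : ℕ}

lemma val_finRotate (i : Fin n) :
    (finRotate n i : ℕ) = if i.val + 1 < n then i.val + 1 else 0 := by
  obtain _ | m := n
  · exact i.elim0
  · rw [coe_finRotate]
    split_ifs <;> simp_all [Fin.ext_iff]; omega

/-- At the last position the successor wraps around to `0`, whose sign is compared with `true`
(unbarred): this encodes the excluded last entry `π_n = 0`. -/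
def signAgree (ε : Fin n → Bool) (i : Fin n) : Bool :=
  ε (finRotate n i) == if i.val + 1 < n then ε i else true

lemma signAgree_injective : Injective (signAgree (n := n)) := by
  intro ε ε' h
  suffices ∀ j (hj : j < n), ε ⟨j, hj⟩ = ε' ⟨j, hj⟩ from funext fun i => this i.val i.isLt
  intro j
  induction j with
  | zero =>
    intro hj
    have hlast := congrFun h ⟨n - 1, by omega⟩
    have hrot : finRotate n ⟨n - 1, by omega⟩ = ⟨0, hj⟩ :=
      Fin.ext (by rw [val_finRotate, if_neg (by simp; omega)])
    simpa [signAgree, hrot, show ¬(n - 1 + 1 < n) by omega] using hlast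
  | succ j ih =>
    intro hj
    have hj' := congrFun h ⟨j, by omega⟩
    have hrot : finRotate n ⟨j, by omega⟩ = ⟨j + 1, hj⟩ :=
      Fin.ext (by rw [val_finRotate, if_pos hj])
    simp only [signAgree, hrot, if_pos hj, ih (by omega)] at hj'
    exact (by decide : ∀ a b c : Bool, (a == c) = (b == c) → a = b) _ _ _ hj'

noncomputable def signAgreeEquiv : (Fin n → Bool) ≃ (Fin n → Bool) :=
  Equiv.ofBijective signAgree (Finite.injective_iff_bijective.mp signAgree_injective)

lemma eq_finRotate_and_signAgree_iff_of_lt {ε : Fin n → Bool} {i v : Fin n}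
    (hi : i.val + 1 < n) :
    v = finRotate n i ∧ signAgree ε i = true ↔ v.val = i.val + 1 ∧ ε v = ε i := by
  have hv : v = finRotate n i ↔ v.val = i.val + 1 := by rw [Fin.ext_iff, val_finRotate, if_pos hi]
  rw [← hv, signAgree, if_pos hi, beq_iff_eq]
  exact and_congr_right fun h => by rw [h]

lemma eq_finRotate_and_signAgree_iff_of_eq {ε : Fin n → Bool} {i v : Fin n}
    (hi : i.val + 1 = n) :
    v = finRotate n i ∧ signAgree ε i = true ↔ v.val = 0 ∧ ε v = true := by
  have hv : v = finRotate n i ↔ v.val = 0 := by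
    rw [Fin.ext_iff, val_finRotate, if_neg (by omega)]
  rw [← hv, signAgree, if_neg (by omega), beq_iff_eq]
  exact and_congr_right fun h => by rw [h]

abbrev SkewDerangementLastNonzero (n : ℕ) (hn : 1 ≤ n) :=
  {p : (Fin n → Bool) × (Fin n → Fin n × Bool) //
    Injective (fun i => (p.2 i).1) ∧
    (∀ i, (p.2 i).2 = p.1 ((p.2 i).1)) ∧
    (∀ i : Fin n, ¬((p.2 i).1.val = i.val + 1 ∧ (p.2 i).2 = p.1 i)) ∧
    p.2 ⟨n - 1, Nat.sub_one_lt_of_le hn le_rfl⟩ ≠ (⟨0, hn⟩, true)}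

/-- A skew derangement recorded by its signs `ε` and underlying values `σ` alone, the signs of the
images being `ε ∘ σ`. -/
abbrev SkewDerangementPair (n : ℕ) :=
  {q : (Fin n → Bool) × (Fin n → Fin n) //
    Injective q.2 ∧ ∀ i, ¬(q.2 i = finRotate n i ∧ signAgree q.1 i = true)}

abbrev TypeBDerangement (n : ℕ) :=
  {f : Fin n → Fin n × Bool // Injective (fun i => (f i).1) ∧ ∀ i, f i ≠ (i, true)}

def SkewDerangementLastNonzero.equivPair (hn : 1 ≤ n) :
    SkewDerangementLastNonzero n hn ≃ SkewDerangementPair n where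
  toFun p := ⟨(p.1.1, fun i => (p.1.2 i).1), by
    obtain ⟨⟨ε, g⟩, hinj, hsign, hfix, hlast⟩ := p
    refine ⟨hinj, fun i hi => ?_⟩
    rcases Nat.lt_or_ge (i.val + 1) n with hlt | hge
    · obtain ⟨hv, hε⟩ := (eq_finRotate_and_signAgree_iff_of_lt hlt).mp hi
      exact hfix i ⟨hv, (hsign i).trans hε⟩
    · have hi_eq : i = ⟨n - 1, by omega⟩ := Fin.ext (by have := i.isLt; simp; omega)
      obtain ⟨hv, hε⟩ := (eq_finRotate_and_signAgree_iff_of_eq (by omega)).mp hi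
      exact hlast (hi_eq ▸ Prod.ext (Fin.ext hv) ((hsign i).trans hε))⟩
  invFun q := ⟨(q.1.1, fun i => (q.1.2 i, q.1.1 (q.1.2 i))), by
    obtain ⟨⟨ε, σ⟩, hinj, hfree⟩ := q
    refine ⟨hinj, fun i => rfl, fun i hi => ?_, fun h => ?_⟩
    · have hlt : i.val + 1 < n := hi.1 ▸ (σ i).isLt
      exact hfree i ((eq_finRotate_and_signAgree_iff_of_lt hlt).mpr hi)
    · obtain ⟨hv, hε⟩ := Prod.ext_iff.mp h
      exact hfree _ ((eq_finRotate_and_signAgree_iff_of_eq (by simp; omega)).mpr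
        ⟨congrArg Fin.val hv, hε⟩)⟩
  left_inv := by
    rintro ⟨⟨ε, g⟩, -, hsign, -⟩
    exact Subtype.ext (Prod.ext rfl (funext fun i => Prod.ext rfl (hsign i).symm))
  right_inv _ := rfl

noncomputable def SkewDerangementPair.equivTypeB : SkewDerangementPair n ≃ TypeBDerangement n where
  toFun q := ⟨fun i => ((finRotate n).symm (q.1.2 i), signAgree q.1.1 i), by
    obtain ⟨⟨ε, σ⟩, hinj, hfree⟩ := q
    refine ⟨(finRotate n).symm.injective.comp hinj, fun i h => hfree i ?_⟩
    obtain ⟨hv, hε⟩ := Prod.ext_iff.mp h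
    exact ⟨(Equiv.symm_apply_eq _).mp hv, hε⟩⟩
  invFun f := ⟨(signAgreeEquiv.symm fun i => (f.1 i).2, fun i => finRotate n (f.1 i).1), by
    obtain ⟨f, hinj, hder⟩ := f
    refine ⟨(finRotate n).injective.comp hinj, fun i ⟨hv, hε⟩ => hder i (Prod.ext ?_ ?_)⟩
    · exact (finRotate n).injective hv
    · exact (congrFun (signAgreeEquiv.apply_symm_apply fun i => (f i).2) i).symm.trans hε⟩
  left_inv := by
    rintro ⟨⟨ε, σ⟩, -, -⟩
    exact Subtype.ext (Prod.ext (signAgreeEquiv.symm_apply_apply ε)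
      (funext fun i => (finRotate n).apply_symm_apply (σ i)))
  right_inv := by
    rintro ⟨f, -, -⟩
    exact Subtype.ext (funext fun i => Prod.ext ((finRotate n).symm_apply_apply (f i).1)
      (congrFun (signAgreeEquiv.apply_symm_apply fun i => (f i).2) i))

/-- Signed skew derangements on [n] whose representation does NOT end with
    unbarred 0 are in bijection with derangements of type B on [n]; in
    particular they number D_n^B. Encoding as in the companion statements:
    a signed skew derangement is a pair (ε, g) with ε : Fin n → Bool the
    signs of X and `g i = (v, b)` the image of the element ±(i+1) of X. -/
theorem skew_derangement_last_nonzero (n : ℕ) (hn : 1 ≤ n) :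
    Nonempty
      ({p : (Fin n → Bool) × (Fin n → Fin n × Bool) //
          Function.Injective (fun i => (p.2 i).1) ∧
          (∀ i, (p.2 i).2 = p.1 ((p.2 i).1)) ∧
          (∀ i : Fin n, ¬((p.2 i).1.val = i.val + 1 ∧ (p.2 i).2 = p.1 i)) ∧
          p.2 ⟨n - 1, by omega⟩ ≠ (⟨0, by omega⟩, true)} ≃
        {f : Fin n → Fin n × Bool //
          Function.Injective (fun i => (f i).1) ∧ ∀ i, f i ≠ (i, true)}) ∧
    Fintype.card {p : (Fin n → Bool) × (Fin n → Fin n × Bool) //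
        Function.Injective (fun i => (p.2 i).1) ∧
        (∀ i, (p.2 i).2 = p.1 ((p.2 i).1)) ∧
        (∀ i : Fin n, ¬((p.2 i).1.val = i.val + 1 ∧ (p.2 i).2 = p.1 i)) ∧
        p.2 ⟨n - 1, by omega⟩ ≠ (⟨0, by omega⟩, true)} =
      Fintype.card {f : Fin n → Fin n × Bool //
        Function.Injective (fun i => (f i).1) ∧ ∀ i, f i ≠ (i, true)} := by
  let e := (SkewDerangementLastNonzero.equivPair hn).trans SkewDerangementPair.equivTypeB
  exact ⟨⟨e⟩, Fintype.card_congr e⟩
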